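/- In a homogeneous delegation game (all proximities equal 1), if delegation profile d is positive (for every agent j, either d_j = j or q*_j(d) > q_j) and agent s with d_s = s switches to delegating to a neighbor t with q_t > q_s (a locally positive delegation), then the resulting profile d' = (d_{-s}, t) is positive. -/

import Mathlib

/-!
An agent whose delegation chain avoids `s` keeps her chain, hence her inherited accuracy.
An agent whose chain reaches `s` used to inherit `q s`; now her chain continues at `t`, whose own
chain cannot pass through `s` (that would give `t` the inherited accuracy `q s < q t`), so she
inherits at least `q t > q s`.
-/

open Classical

/-- Inherited accuracy in a homogeneous delegation game: the guru's accuracy, or `1/2`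
if the delegation ends in a cycle. -/
noncomputable def homAcc {n : ℕ} (q : Fin n → ℝ) (d : Fin n → Fin n) (i : Fin n) : ℝ :=
  if h : ∃ k, d (d^[k] i) = d^[k] i then q (d^[Nat.find h] i) else 1/2

open Function

theorem iterate_update_of_forall_lt_ne {α : Type*} [DecidableEq α] {f : α → α} {a b x : α}
    {k : ℕ} (h : ∀ m < k, f^[m] x ≠ a) : (update f a b)^[k] x = f^[k] x := by
  induction k with
  | zero => rfl
  | succ k ih =>
    rw [iterate_succ_apply', iterate_succ_apply', ih fun m hm => h m (hm.trans k.lt_succ_self),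
      update_of_ne (h k k.lt_succ_self)]

section homAcc

variable {n : ℕ} {q : Fin n → ℝ} {d e : Fin n → Fin n} {i j : Fin n}

theorem homAcc_congr (h : ∀ k, d^[k] i = e^[k] j) : homAcc q d i = homAcc q e j := by
  have hstep : ∀ k, d (e^[k] j) = e (e^[k] j) := fun k => by
    simpa only [iterate_succ_apply', h] using h (k + 1)
  simp only [homAcc, h, hstep]

theorem homAcc_eq_of_iterate_eq {g : Fin n} {k : ℕ} (hk : d^[k] j = g) (hg : IsFixedPt d g) :
    homAcc q d j = q g := by
  have h : ∃ m, d (d^[m] j) = d^[m] j := ⟨k, by rw [hk]; exact hg⟩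
  have hle : Nat.find h ≤ k := Nat.find_min' h (by rw [hk]; exact hg)
  rw [homAcc, dif_pos h, ← hk, ← Nat.sub_add_cancel hle, iterate_add_apply]
  have hfix : IsFixedPt d (d^[Nat.find h] j) := Nat.find_spec h
  rw [(hfix.iterate _).eq]

theorem homAcc_iterate (k : ℕ) : homAcc q d (d^[k] j) = homAcc q d j := by
  by_cases h : ∃ m, IsFixedPt d (d^[m] j)
  · obtain ⟨m, hm⟩ := h
    have hk : d^[m] (d^[k] j) = d^[m] j := by
      rw [← iterate_add_apply, Nat.add_comm, iterate_add_apply, (hm.iterate k).eq]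
    rw [homAcc_eq_of_iterate_eq rfl hm, homAcc_eq_of_iterate_eq hk hm]
  · have h' : ¬∃ m, d (d^[m] (d^[k] j)) = d^[m] (d^[k] j) := fun ⟨m, hm⟩ =>
      h ⟨m + k, by rw [iterate_add_apply]; exact hm⟩
    have h'' : ¬∃ m, d (d^[m] j) = d^[m] j := h
    rw [homAcc, homAcc, dif_neg h', dif_neg h'']

theorem le_homAcc (h : d j = j ∨ q j < homAcc q d j) : q j ≤ homAcc q d j := by
  rcases h with hfix | hlt
  · exact (homAcc_eq_of_iterate_eq (k := 0) rfl hfix).ge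
  · exact hlt.le

theorem homAcc_update_of_forall_iterate_ne {s t : Fin n} (h : ∀ m, d^[m] j ≠ s) :
    homAcc q (update d s t) j = homAcc q d j :=
  homAcc_congr fun _ => iterate_update_of_forall_lt_ne fun m _ => h m

theorem iterate_ne_of_lt_of_isFixedPt {s t : Fin n} (ht : d t = t ∨ q t < homAcc q d t)
    (hs : IsFixedPt d s) (hst : q s < q t) (m : ℕ) : d^[m] t ≠ s := fun hm =>
  (le_homAcc ht).not_gt (homAcc_eq_of_iterate_eq hm hs ▸ hst)

end homAcc

theorem locally_positive_extends_positive_general (n : ℕ)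
    (q : Fin n → ℝ)
    (d : Fin n → Fin n)
    (hpos : ∀ j, d j = j ∨ q j < homAcc q d j)
    (s t : Fin n) (hds : d s = s) (hlp : q s < q t) :
    ∀ j, Function.update d s t j = j ∨ q j < homAcc q (Function.update d s t) j := by
  intro j
  by_cases hj : ∃ k, d^[k] j = s
  · have hk := Nat.find_spec hj
    have hreach : (update d s t)^[Nat.find hj + 1] j = t := by
      rw [iterate_succ_apply', iterate_update_of_forall_lt_ne fun m hm => Nat.find_min hj hm, hk,
        update_self]
    right
    calc q j ≤ homAcc q d j := le_homAcc (hpos j)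
      _ = q s := homAcc_eq_of_iterate_eq hk hds
      _ < q t := hlp
      _ ≤ homAcc q d t := le_homAcc (hpos t)
      _ = homAcc q (update d s t) t :=
        (homAcc_update_of_forall_iterate_ne (iterate_ne_of_lt_of_isFixedPt (hpos t) hds hlp)).symm
      _ = homAcc q (update d s t) j := by
        rw [← homAcc_iterate (j := j) (Nat.find hj + 1), hreach]
  · push Not at hj
    have hjs : j ≠ s := hj 0
    rw [update_of_ne hjs, homAcc_update_of_forall_iterate_ne hj]
    exact hpos j

/-- In a homogeneous delegation game, if a positive delegation profile is extended by a
locally positive delegation of a directly-voting agent, the result is again positive. -/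
theorem locally_positive_extends_positive (n : ℕ) (R : Fin n → Fin n → Prop)
    (q : Fin n → ℝ) (hq : ∀ i, q i ∈ Set.Icc (1/2 : ℝ) 1)
    (d : Fin n → Fin n)
    (hvalid : ∀ j, d j = j ∨ R j (d j))
    (hpos : ∀ j, d j = j ∨ q j < homAcc q d j)
    (s t : Fin n) (hds : d s = s) (hRst : R s t) (hlp : q s < q t) :
    ∀ j, Function.update d s t j = j ∨ q j < homAcc q (Function.update d s t) j :=
  locally_positive_extends_positive_general n q d hpos s t hds hlp
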